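/- The integrals I := ∫_{−∞}^{∞} [ y e^{−y²}/(√π erfc(y)) − χ_{(0,∞)}(y)(y² + 1/2) ] dy and I₃ := ∫_{−∞}^{∞} [ ( e^{−y²}/(√π erfc(y)) )² − χ_{(0,∞)}(y)(y² + 1) ] dy both converge, and I₃ = I. -/

import Mathlib

open Real MeasureTheory Set Filter Topology

/-!
Write `r(y) = e^{-y²} / (√π erfc y) = e^{-y²} / (2 ∫_y^∞ e^{-t²} dt)`. Differentiating the
tail integral gives `r' = 2 r² - 2 y r`, so the difference of the two integrands is `(r / 2)'`
on `(-∞, 0]` and `((r - y) / 2)'` on `(0, ∞)`. Since `r → 0` at `-∞` and `r - y → 0` at `+∞`,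
the integral of the difference telescopes to `r(0) / 2 - r(0) / 2 = 0`.

Convergence: on `y ≤ 0` the tail integral is at least its value at `0`, so `r ≤ C e^{-y²}`.
For `y > 0`, comparing derivatives with explicit functions vanishing at `+∞` bounds the
Gaussian tail above and below; this gives `y + 1/(2y) - O(y⁻³) ≤ r ≤ y + 1/(2y)`, which makes
both integrands `O(y⁻²)` at `+∞`.
-/

/-- The complementary error function `erfc(y) = (2/√π) ∫_y^∞ e^{-t²} dt`. -/
noncomputable def erfc (y : ℝ) : ℝ :=
  (2 / Real.sqrt π) * ∫ t in Set.Ioi y, Real.exp (-t ^ 2)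

noncomputable def gaussTail (y : ℝ) : ℝ := ∫ t in Ioi y, exp (-t ^ 2)

lemma integrable_exp_neg_sq : Integrable fun t : ℝ => exp (-t ^ 2) := by
  simpa using integrable_exp_neg_mul_sq one_pos

lemma tendsto_exp_neg_sq_atTop : Tendsto (fun t : ℝ => exp (-t ^ 2)) atTop (𝓝 0) :=
  tendsto_exp_atBot.comp (tendsto_neg_atTop_atBot.comp (tendsto_pow_atTop two_ne_zero))

lemma tendsto_exp_neg_sq_atBot : Tendsto (fun t : ℝ => exp (-t ^ 2)) atBot (𝓝 0) := by
  simpa [Function.comp_def] using tendsto_exp_neg_sq_atTop.comp tendsto_neg_atBot_atTop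

lemma hasDerivAt_exp_neg_sq (t : ℝ) :
    HasDerivAt (fun t : ℝ => exp (-t ^ 2)) (-2 * t * exp (-t ^ 2)) t := by
  simpa [mul_comm] using ((hasDerivAt_pow 2 t).neg).exp

lemma sqrt_pi_mul_erfc (y : ℝ) : √π * erfc y = 2 * gaussTail y := by
  have : √π ≠ 0 := (sqrt_pos.2 pi_pos).ne'
  rw [erfc, gaussTail]
  field_simp

lemma gaussTail_pos (y : ℝ) : 0 < gaussTail y := by
  rw [gaussTail, setIntegral_pos_iff_support_of_nonneg_ae
    (.of_forall fun t => (exp_pos _).le) integrable_exp_neg_sq.integrableOn]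
  simp [Function.support, (exp_pos _).ne']

lemma gaussTail_antitone : Antitone gaussTail := fun _ _ hab =>
  setIntegral_mono_set integrable_exp_neg_sq.integrableOn (.of_forall fun _ => (exp_pos _).le)
    (.of_forall (Ioi_subset_Ioi hab))

lemma gaussTail_eq_sub_intervalIntegral (y : ℝ) :
    gaussTail y = gaussTail 0 - ∫ t in (0 : ℝ)..y, exp (-t ^ 2) := by
  rw [← intervalIntegral.integral_Ioi_sub_Ioi' integrable_exp_neg_sq.integrableOn
    integrable_exp_neg_sq.integrableOn, gaussTail, gaussTail, sub_sub_cancel]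

lemma hasDerivAt_gaussTail (y : ℝ) : HasDerivAt gaussTail (-exp (-y ^ 2)) y := by
  have hcont : Continuous fun t : ℝ => exp (-t ^ 2) := by fun_prop
  have hprim : HasDerivAt (fun x => ∫ t in (0 : ℝ)..x, exp (-t ^ 2)) (exp (-y ^ 2)) y :=
    intervalIntegral.integral_hasDerivAt_right (hcont.intervalIntegrable _ _)
      (hcont.stronglyMeasurableAtFilter _ _) hcont.continuousAt
  rw [funext gaussTail_eq_sub_intervalIntegral]
  exact hprim.const_sub _

lemma continuous_gaussTail : Continuous gaussTail :=
  continuous_iff_continuousAt.2 fun y => (hasDerivAt_gaussTail y).continuousAt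

lemma tendsto_gaussTail_atTop : Tendsto gaussTail atTop (𝓝 0) := by
  have hprim := intervalIntegral_tendsto_integral_Ioi 0 integrable_exp_neg_sq.integrableOn
    tendsto_id
  have h := (tendsto_const_nhds (x := gaussTail 0)).sub hprim
  rw [← gaussTail, sub_self] at h
  exact h.congr fun y => (gaussTail_eq_sub_intervalIntegral y).symm

lemma nonpos_of_hasDerivAt_nonneg {φ φ' : ℝ → ℝ} {a : ℝ}
    (hφ : ∀ t ∈ Ici a, HasDerivAt φ (φ' t) t) (hφ' : ∀ t ∈ Ioi a, 0 ≤ φ' t)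
    (hlim : Tendsto φ atTop (𝓝 0)) : φ a ≤ 0 := by
  have hmono : MonotoneOn φ (Ici a) :=
    monotoneOn_of_hasDerivWithinAt_nonneg (convex_Ici a)
      (fun t ht => (hφ t ht).continuousAt.continuousWithinAt)
      (fun t ht => (hφ t (interior_subset ht)).hasDerivWithinAt) (by simpa using hφ')
  exact ge_of_tendsto hlim ((eventually_ge_atTop a).mono fun t ht => hmono self_mem_Ici ht ht)

lemma gaussTail_le_of_hasDerivAt {U U' : ℝ → ℝ} {a : ℝ}
    (hU : ∀ t ∈ Ici a, HasDerivAt U (U' t) t) (hU' : ∀ t ∈ Ioi a, U' t ≤ -exp (-t ^ 2))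
    (hlim : Tendsto U atTop (𝓝 0)) : gaussTail a ≤ U a := by
  have := nonpos_of_hasDerivAt_nonneg (φ := fun t => gaussTail t - U t)
    (fun t ht => (hasDerivAt_gaussTail t).sub (hU t ht))
    (fun t ht => by linarith [hU' t ht]) (by simpa using tendsto_gaussTail_atTop.sub hlim)
  linarith

lemma le_gaussTail_of_hasDerivAt {L L' : ℝ → ℝ} {a : ℝ}
    (hL : ∀ t ∈ Ici a, HasDerivAt L (L' t) t) (hL' : ∀ t ∈ Ioi a, -exp (-t ^ 2) ≤ L' t)
    (hlim : Tendsto L atTop (𝓝 0)) : L a ≤ gaussTail a := by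
  have := nonpos_of_hasDerivAt_nonneg (φ := fun t => L t - gaussTail t)
    (fun t ht => (hL t ht).sub (hasDerivAt_gaussTail t))
    (fun t ht => by linarith [hL' t ht]) (by simpa using hlim.sub tendsto_gaussTail_atTop)
  linarith

lemma le_gaussTail (y : ℝ) : y * exp (-y ^ 2) / (2 * y ^ 2 + 1) ≤ gaussTail y := by
  refine le_gaussTail_of_hasDerivAt (L := fun t => t * exp (-t ^ 2) / (2 * t ^ 2 + 1))
    (L' := fun t => -exp (-t ^ 2) + 2 * exp (-t ^ 2) / (2 * t ^ 2 + 1) ^ 2)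
    (fun t _ => ?_) (fun t _ => ?_) ?_
  · have hden : HasDerivAt (fun t : ℝ => 2 * t ^ 2 + 1) (4 * t) t := by
      refine (((hasDerivAt_pow 2 t).const_mul 2).add_const 1).congr_deriv ?_
      ring
    refine (((hasDerivAt_id' t).mul (hasDerivAt_exp_neg_sq t)).div hden
      (by positivity)).congr_deriv ?_
    simp only [Pi.mul_apply]
    field_simp
    ring
  · have : 0 ≤ 2 * exp (-t ^ 2) / (2 * t ^ 2 + 1) ^ 2 := by positivity
    linarith
  · refine squeeze_zero_norm' (.of_forall fun t => ?_) tendsto_exp_neg_sq_atTop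
    rw [norm_div, norm_mul, norm_of_nonneg (exp_pos (-t ^ 2)).le,
      norm_of_nonneg (by positivity : (0 : ℝ) ≤ 2 * t ^ 2 + 1), div_le_iff₀ (by positivity)]
    have : ‖t‖ ≤ 2 * t ^ 2 + 1 := by
      rw [norm_eq_abs]; nlinarith [abs_nonneg t, sq_abs t, sq_nonneg (|t| - 1)]
    nlinarith [exp_pos (-t ^ 2)]

-- `U` is the asymptotic expansion `e^{-t²} (1/(2t) - 1/(4t³) + 3/(8t⁵))`, cut after an odd
-- number of terms.
lemma gaussTail_le {y : ℝ} (hy : 0 < y) :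
    gaussTail y ≤ exp (-y ^ 2) * (4 * y ^ 4 - 2 * y ^ 2 + 3) / (8 * y ^ 5) := by
  refine gaussTail_le_of_hasDerivAt
    (U := fun t => exp (-t ^ 2) * (4 * t ^ 4 - 2 * t ^ 2 + 3) / (8 * t ^ 5))
    (U' := fun t => -exp (-t ^ 2) - 15 * exp (-t ^ 2) / (8 * t ^ 6))
    (fun t ht => ?_) (fun t _ => ?_) ?_
  · have ht : t ≠ 0 := (hy.trans_le ht).ne'
    have hnum : HasDerivAt (fun t : ℝ => 4 * t ^ 4 - 2 * t ^ 2 + 3) (16 * t ^ 3 - 4 * t) t := by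
      refine ((((hasDerivAt_pow 4 t).const_mul 4).sub
        ((hasDerivAt_pow 2 t).const_mul 2)).add_const 3).congr_deriv ?_
      ring
    have hden : HasDerivAt (fun t : ℝ => 8 * t ^ 5) (40 * t ^ 4) t := by
      refine ((hasDerivAt_pow 5 t).const_mul 8).congr_deriv ?_
      ring
    refine (((hasDerivAt_exp_neg_sq t).mul hnum).div hden (by positivity)).congr_deriv ?_
    simp only [Pi.mul_apply]
    field_simp
    ring
  · have : 0 ≤ 15 * exp (-t ^ 2) / (8 * t ^ 6) := by positivity
    linarith
  · refine squeeze_zero_norm' ((eventually_ge_atTop 1).mono fun t ht => ?_)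
      tendsto_exp_neg_sq_atTop
    have hnum : 0 ≤ 4 * t ^ 4 - 2 * t ^ 2 + 3 := by nlinarith [sq_nonneg (2 * t ^ 2 - 1)]
    rw [norm_of_nonneg (by positivity), div_le_iff₀ (by positivity)]
    have : 4 * t ^ 4 - 2 * t ^ 2 + 3 ≤ 8 * t ^ 5 := by
      nlinarith [pow_le_pow_right₀ ht (show 4 ≤ 5 by norm_num), one_le_pow₀ (n := 4) ht]
    nlinarith [exp_pos (-t ^ 2)]

noncomputable def erfcRatio (y : ℝ) : ℝ := exp (-y ^ 2) / (√π * erfc y)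

lemma erfcRatio_eq (y : ℝ) : erfcRatio y = exp (-y ^ 2) / (2 * gaussTail y) := by
  rw [erfcRatio, sqrt_pi_mul_erfc]

lemma erfcRatio_pos (y : ℝ) : 0 < erfcRatio y := by
  have := gaussTail_pos y
  rw [erfcRatio_eq]
  positivity

lemma continuous_erfcRatio : Continuous erfcRatio := by
  rw [funext erfcRatio_eq]
  exact (by fun_prop : Continuous fun y : ℝ => exp (-y ^ 2)).div
    (continuous_const.mul continuous_gaussTail) fun y => (mul_pos two_pos (gaussTail_pos y)).ne'

lemma hasDerivAt_erfcRatio (y : ℝ) :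
    HasDerivAt erfcRatio (2 * erfcRatio y ^ 2 - 2 * y * erfcRatio y) y := by
  have hE := gaussTail_pos y
  rw [funext erfcRatio_eq]
  refine ((hasDerivAt_exp_neg_sq y).div ((hasDerivAt_gaussTail y).const_mul 2)
    (by positivity)).congr_deriv ?_
  field_simp
  ring

lemma erfcRatio_le_of_nonpos {y : ℝ} (hy : y ≤ 0) :
    erfcRatio y ≤ exp (-y ^ 2) / (2 * gaussTail 0) := by
  have h0 := gaussTail_pos 0
  rw [erfcRatio_eq]
  gcongr
  exact gaussTail_antitone hy

lemma mul_erfcRatio_le {y : ℝ} (hy : 0 < y) : y * erfcRatio y ≤ y ^ 2 + 1 / 2 := by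
  have hE := gaussTail_pos y
  have h := le_gaussTail y
  rw [div_le_iff₀ (by positivity)] at h
  rw [erfcRatio_eq, ← mul_div_assoc, div_le_iff₀ (by positivity)]
  nlinarith

lemma le_mul_erfcRatio {y : ℝ} (hy : 0 < y) :
    4 * y ^ 5 ≤ (4 * y ^ 4 - 2 * y ^ 2 + 3) * erfcRatio y := by
  have hE := gaussTail_pos y
  have h := gaussTail_le hy
  rw [le_div_iff₀ (by positivity)] at h
  rw [erfcRatio_eq, ← mul_div_assoc, le_div_iff₀ (by positivity)]
  nlinarith

lemma abs_mul_erfcRatio_sub_le {y : ℝ} (hy : 1 ≤ y) :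
    |y * erfcRatio y - (y ^ 2 + 1 / 2)| ≤ 2 / y ^ 2 := by
  have hy0 : 0 < y := one_pos.trans_le hy
  have hN : 0 < 4 * y ^ 4 - 2 * y ^ 2 + 3 := by nlinarith [sq_nonneg (2 * y ^ 2 - 1)]
  have hub := mul_erfcRatio_le hy0
  have hlb : y ^ 4 + y ^ 2 / 2 - 2 ≤ y ^ 2 * (y * erfcRatio y) := by
    refine le_of_mul_le_mul_right ?_ hN
    nlinarith [mul_le_mul_of_nonneg_left (le_mul_erfcRatio hy0) (pow_pos hy0 3).le,
      sq_nonneg (y ^ 2 - 1)]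
  rw [abs_le, ← neg_div, div_le_iff₀ (by positivity), le_div_iff₀ (by positivity)]
  constructor <;> nlinarith

lemma abs_erfcRatio_sq_sub_le {y : ℝ} (hy : 1 ≤ y) :
    |erfcRatio y ^ 2 - (y ^ 2 + 1)| ≤ 2 / y ^ 2 := by
  have hy0 : 0 < y := one_pos.trans_le hy
  have hN : 0 < 4 * y ^ 4 - 2 * y ^ 2 + 3 := by nlinarith [sq_nonneg (2 * y ^ 2 - 1)]
  have hr := erfcRatio_pos y
  have hub : (y * erfcRatio y) ^ 2 ≤ (y ^ 2 + 1 / 2) ^ 2 :=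
    pow_le_pow_left₀ (by positivity) (mul_erfcRatio_le hy0) 2
  have hlb : (4 * y ^ 5) ^ 2 ≤ ((4 * y ^ 4 - 2 * y ^ 2 + 3) * erfcRatio y) ^ 2 :=
    pow_le_pow_left₀ (by positivity) (le_mul_erfcRatio hy0) 2
  have hquartic : 0 ≤ 20 * y ^ 8 - 48 * y ^ 6 + 59 * y ^ 4 - 33 * y ^ 2 + 18 := by
    nlinarith [sq_nonneg (5 * y ^ 4 - 6 * y ^ 2), sq_nonneg (302 * y ^ 2 - 165), sq_nonneg y]
  have hlow : y ^ 4 + y ^ 2 - 2 ≤ y ^ 2 * erfcRatio y ^ 2 := by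
    refine le_of_mul_le_mul_right ?_ (pow_pos hN 2)
    nlinarith [pow_pos hy0 2]
  rw [abs_le, ← neg_div, div_le_iff₀ (by positivity), le_div_iff₀ (by positivity)]
  constructor <;> nlinarith

lemma tendsto_erfcRatio_atBot : Tendsto erfcRatio atBot (𝓝 0) := by
  refine squeeze_zero' (.of_forall fun y => (erfcRatio_pos y).le)
    ((eventually_le_atBot 0).mono fun y hy => erfcRatio_le_of_nonpos hy) ?_
  simpa using tendsto_exp_neg_sq_atBot.div_const (2 * gaussTail 0)

lemma tendsto_erfcRatio_sub_atTop : Tendsto (fun y => erfcRatio y - y) atTop (𝓝 0) := by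
  refine squeeze_zero_norm' ((eventually_ge_atTop 1).mono fun y hy => ?_)
    (tendsto_const_nhds.div_atTop tendsto_id : Tendsto (fun y : ℝ => 3 / y) atTop (𝓝 0))
  have hy0 : 0 < y := one_pos.trans_le hy
  have h := abs_le.1 ((abs_mul_erfcRatio_sub_le hy).trans
    (div_le_self zero_le_two (one_le_pow₀ hy)))
  rw [norm_eq_abs, abs_le, ← neg_div, div_le_iff₀ hy0, le_div_iff₀ hy0]
  constructor <;> nlinarith

lemma integrableOn_mul_erfcRatio_Iic : IntegrableOn (fun y => y * erfcRatio y) (Iic 0) := by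
  have hdom : Integrable fun y : ℝ => |y * exp (-y ^ 2)| / (2 * gaussTail 0) := by
    simpa using (integrable_mul_exp_neg_mul_sq one_pos).abs.div_const (2 * gaussTail 0)
  refine hdom.integrableOn.mono'
    (continuous_id.mul continuous_erfcRatio).aestronglyMeasurable.restrict
    ((ae_restrict_iff' measurableSet_Iic).2 (.of_forall fun y hy => ?_))
  rw [norm_mul, norm_eq_abs, norm_of_nonneg (erfcRatio_pos y).le, abs_mul,
    abs_of_pos (exp_pos _), mul_div_assoc]
  exact mul_le_mul_of_nonneg_left (erfcRatio_le_of_nonpos hy) (abs_nonneg y)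

lemma integrableOn_erfcRatio_sq_Iic : IntegrableOn (fun y => erfcRatio y ^ 2) (Iic 0) := by
  have hdom : Integrable fun y : ℝ => exp (-y ^ 2) / (2 * gaussTail 0) ^ 2 :=
    integrable_exp_neg_sq.div_const _
  refine hdom.integrableOn.mono' (continuous_erfcRatio.pow 2).aestronglyMeasurable.restrict
    ((ae_restrict_iff' measurableSet_Iic).2 (.of_forall fun y hy => ?_))
  have hexp : exp (-y ^ 2) ≤ 1 := exp_le_one_iff.2 (by nlinarith)
  calc ‖erfcRatio y ^ 2‖ = erfcRatio y ^ 2 := norm_of_nonneg (by positivity)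
    _ ≤ (exp (-y ^ 2) / (2 * gaussTail 0)) ^ 2 :=
      pow_le_pow_left₀ (erfcRatio_pos y).le (erfcRatio_le_of_nonpos hy) 2
    _ = exp (-y ^ 2) * exp (-y ^ 2) / (2 * gaussTail 0) ^ 2 := by ring
    _ ≤ exp (-y ^ 2) / (2 * gaussTail 0) ^ 2 := by
      gcongr
      exact mul_le_of_le_one_right (exp_pos _).le hexp

lemma integrable_sub_indicator_Ioi_of_abs_sub_le {f p : ℝ → ℝ} {C : ℝ} (hf : Continuous f)
    (hp : Continuous p) (hneg : IntegrableOn f (Iic 0)) (hdecay : ∀ y, 1 ≤ y → |f y - p y| ≤ C / y ^ 2) :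
    Integrable fun y => f y - (Ioi 0).indicator p y := by
  have htail : IntegrableOn (fun y => f y - p y) (Ioi 1) := by
    have hdom := (integrableOn_Ioi_rpow_of_lt (by norm_num : (-2 : ℝ) < -1) one_pos).const_mul C
    refine hdom.mono' (hf.sub hp).aestronglyMeasurable.restrict
      ((ae_restrict_iff' measurableSet_Ioi).2 (.of_forall fun y hy => ?_))
    rw [rpow_neg (zero_le_one.trans hy.out.le), rpow_two, norm_eq_abs, ← div_eq_mul_inv]
    exact hdecay y hy.out.le
  have hpos : IntegrableOn (fun y => f y - p y) (Ioi 0) := by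
    rw [← Ioc_union_Ioi_eq_Ioi zero_le_one]
    exact (hf.sub hp).integrableOn_Ioc.union htail
  rw [← integrableOn_univ, ← Iic_union_Ioi (a := 0)]
  refine (hneg.congr_fun (fun y hy => ?_) measurableSet_Iic).union
    (hpos.congr_fun (fun y hy => ?_) measurableSet_Ioi)
  · rw [indicator_of_notMem (notMem_Ioi.2 hy.out), sub_zero]
  · rw [indicator_of_mem hy]

lemma integral_eq_of_hasDerivAt_Iic_Ioi {ψ F G : ℝ → ℝ} {a l m : ℝ} (hψ : Integrable ψ)
    (hF : ∀ x ∈ Iic a, HasDerivAt F (ψ x) x) (hFl : Tendsto F atBot (𝓝 l))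
    (hG : ∀ x ∈ Ioi a, HasDerivAt G (ψ x) x) (hGa : ContinuousWithinAt G (Ici a) a)
    (hGm : Tendsto G atTop (𝓝 m)) :
    ∫ x, ψ x = (F a - l) + (m - G a) := by
  rw [← intervalIntegral.integral_Iic_add_Ioi hψ.integrableOn hψ.integrableOn,
    integral_Iic_of_hasDerivAt_of_tendsto' hF hψ.integrableOn hFl,
    integral_Ioi_of_hasDerivAt_of_tendsto hGa hG hψ.integrableOn hGm]

lemma integrable_mul_erfcRatio_sub_indicator :
    Integrable fun y => y * erfcRatio y - (Ioi 0).indicator (fun y => y ^ 2 + 1 / 2) y :=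
  integrable_sub_indicator_Ioi_of_abs_sub_le (continuous_id.mul continuous_erfcRatio)
    (by fun_prop) integrableOn_mul_erfcRatio_Iic fun _ => abs_mul_erfcRatio_sub_le

lemma integrable_erfcRatio_sq_sub_indicator :
    Integrable fun y => erfcRatio y ^ 2 - (Ioi 0).indicator (fun y => y ^ 2 + 1) y :=
  integrable_sub_indicator_Ioi_of_abs_sub_le (continuous_erfcRatio.pow 2) (by fun_prop)
    integrableOn_erfcRatio_sq_Iic fun _ => abs_erfcRatio_sq_sub_le

lemma integral_erfcRatio_sq_sub_mul_erfcRatio :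
    ∫ y, ((erfcRatio y ^ 2 - (Ioi 0).indicator (fun y => y ^ 2 + 1) y) -
      (y * erfcRatio y - (Ioi 0).indicator (fun y => y ^ 2 + 1 / 2) y)) = 0 := by
  have hneg (x : ℝ) (hx : x ∈ Iic 0) : HasDerivAt (fun y => erfcRatio y / 2)
      ((erfcRatio x ^ 2 - (Ioi 0).indicator (fun y => y ^ 2 + 1) x) -
        (x * erfcRatio x - (Ioi 0).indicator (fun y => y ^ 2 + 1 / 2) x)) x := by
    refine ((hasDerivAt_erfcRatio x).div_const 2).congr_deriv ?_
    rw [indicator_of_notMem (notMem_Ioi.2 hx.out), indicator_of_notMem (notMem_Ioi.2 hx.out)]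
    ring
  have hpos (x : ℝ) (hx : x ∈ Ioi 0) : HasDerivAt (fun y => (erfcRatio y - y) / 2)
      ((erfcRatio x ^ 2 - (Ioi 0).indicator (fun y => y ^ 2 + 1) x) -
        (x * erfcRatio x - (Ioi 0).indicator (fun y => y ^ 2 + 1 / 2) x)) x := by
    refine (((hasDerivAt_erfcRatio x).sub (hasDerivAt_id x)).div_const 2).congr_deriv ?_
    rw [indicator_of_mem hx, indicator_of_mem hx]
    ring
  rw [integral_eq_of_hasDerivAt_Iic_Ioi
    (integrable_erfcRatio_sq_sub_indicator.sub' integrable_mul_erfcRatio_sub_indicator)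
    hneg (by simpa using tendsto_erfcRatio_atBot.div_const 2) hpos
    ((continuous_erfcRatio.sub continuous_id).div_const 2).continuousWithinAt
    (by simpa using tendsto_erfcRatio_sub_atTop.div_const 2)]
  ring

theorem integral_I3_eq_I :
    Integrable (fun y : ℝ => y * Real.exp (-y ^ 2) / (Real.sqrt π * erfc y) -
      Set.indicator (Set.Ioi (0 : ℝ)) (fun y => y ^ 2 + 1 / 2) y) ∧
    Integrable (fun y : ℝ => (Real.exp (-y ^ 2) / (Real.sqrt π * erfc y)) ^ 2 -
      Set.indicator (Set.Ioi (0 : ℝ)) (fun y => y ^ 2 + 1) y) ∧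
    (∫ y : ℝ, ((Real.exp (-y ^ 2) / (Real.sqrt π * erfc y)) ^ 2 -
        Set.indicator (Set.Ioi (0 : ℝ)) (fun y => y ^ 2 + 1) y)) =
      ∫ y : ℝ, (y * Real.exp (-y ^ 2) / (Real.sqrt π * erfc y) -
        Set.indicator (Set.Ioi (0 : ℝ)) (fun y => y ^ 2 + 1 / 2) y) := by
  have hr (y : ℝ) : exp (-y ^ 2) / (√π * erfc y) = erfcRatio y := rfl
  simp only [mul_div_assoc, hr]
  refine ⟨integrable_mul_erfcRatio_sub_indicator, integrable_erfcRatio_sq_sub_indicator, ?_⟩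
  rw [← sub_eq_zero, ← integral_sub integrable_erfcRatio_sq_sub_indicator
    integrable_mul_erfcRatio_sub_indicator]
  exact integral_erfcRatio_sq_sub_mul_erfcRatio
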